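/- A directed graph G is stable with respect to the representation M_u (equivalently, the unit η^{M_u,G} is an isomorphism) if and only if G is the graph of an equivalence relation on its node set: i.e., the relation {(∂₀(f), ∂₁(f)) : f an arc} is reflexive, symmetric, and transitive, and G has no parallel arcs. -/

import Mathlib

open CategoryTheory Limits Opposite WalkingParallelPair WalkingParallelPairHom

universe v w

section Machinery

variable {C : Type} [SmallCategory C] {D : Type w} [Category.{v} D]

/-- The diagram `Elts(G) → C → D` whose colimit is `G ⊗ M`. -/
def elemDiagram (M : C ⥤ D) (G : Cᵒᵖ ⥤ Type) : G.Elementsᵒᵖ ⥤ D :=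
  (CategoryOfElements.π G).leftOp ⋙ M

/-- `G ⊗ M`, the left Kan extension of `M` along Yoneda evaluated at `G`, computed as the
colimit of `M` over the category of elements of `G`. -/
noncomputable def tensorObj (M : C ⥤ D) (G : Cᵒᵖ ⥤ Type)
    [HasColimitsOfShape G.Elementsᵒᵖ D] : D :=
  colimit (elemDiagram M G)

/-- The colimit injection `μ^{M,G}_{(c,x)} : M(c) ⟶ G ⊗ M`. -/
noncomputable def tensorι (M : C ⥤ D) (G : Cᵒᵖ ⥤ Type)
    [HasColimitsOfShape G.Elementsᵒᵖ D] (c : C) (x : G.obj (op c)) :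
    M.obj c ⟶ tensorObj M G :=
  colimit.ι (elemDiagram M G) (op ⟨op c, x⟩)

/-- The diagram `Elts(y(c)) ≅ Over c → C → D` whose limit is the interface `Int_M(c)`. -/
def overDiagram (M : C ⥤ D) (c : C) : Over c ⥤ D :=
  Over.forget c ⋙ M

/-- The interface `Int_M(c)` of a representation `M` at `c`. -/
noncomputable def interfaceObj (M : C ⥤ D) [∀ c : C, HasLimitsOfShape (Over c) D] (c : C) : D :=
  limit (overDiagram M c)

/-- The limit projection `ν^{M,c}_{(c',f)} : Int_M(c) ⟶ M(c')`. -/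
noncomputable def interfaceπ (M : C ⥤ D) [∀ c : C, HasLimitsOfShape (Over c) D]
    {c' c : C} (f : c' ⟶ c) : interfaceObj M c ⟶ M.obj c' :=
  limit.π (overDiagram M c) (Over.mk f)

/-- The interface transformation `φ^{M,G}_c : G(c) → Hom_D(Int_M(c), G ⊗ M)`,
`x ↦ μ^{M,G}_{(c,x)} ∘ ν^{M,c}_{(c,id_c)}`. -/
noncomputable def interfaceTrans (M : C ⥤ D) (G : Cᵒᵖ ⥤ Type)
    [HasColimitsOfShape G.Elementsᵒᵖ D] [∀ c : C, HasLimitsOfShape (Over c) D]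
    (c : C) (x : G.obj (op c)) : interfaceObj M c ⟶ tensorObj M G :=
  interfaceπ M (𝟙 c) ≫ tensorι M G c x

end Machinery

section DirectedGraphs

/-- Arcs of a directed graph `G`, presented as a presheaf on the walking parallel pair. -/
abbrev arcs (G : WalkingParallelPairᵒᵖ ⥤ Type) : Type := G.obj (op one)

/-- Nodes of the directed graph `G`. -/
abbrev nodes (G : WalkingParallelPairᵒᵖ ⥤ Type) : Type := G.obj (op zero)

/-- The source map of `G`. -/
abbrev srcMap (G : WalkingParallelPairᵒᵖ ⥤ Type) : arcs G → nodes G :=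
  G.map (Quiver.Hom.op left)

/-- The target map of `G`. -/
abbrev tgtMap (G : WalkingParallelPairᵒᵖ ⥤ Type) : arcs G → nodes G :=
  G.map (Quiver.Hom.op right)

/-- The presheaf on `↑↑` (i.e. the directed graph) determined by source/target maps. -/
def dgPresheaf {A N : Type} (s t : A → N) : WalkingParallelPairᵒᵖ ⥤ Type :=
  walkingParallelPairOpEquiv.inverse ⋙ parallelPair (TypeCat.ofHom s) (TypeCat.ofHom t)

/-- A homomorphism of directed graphs, as a morphism of the associated presheaves. -/
def dgHom {A N A' N' : Type} (s t : A → N) (s' t' : A' → N')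
    (α : A → A') (ν : N → N') (hs : ∀ a, s' (α a) = ν (s a)) (ht : ∀ a, t' (α a) = ν (t a)) :
    dgPresheaf s t ⟶ dgPresheaf s' t' :=
  Functor.whiskerLeft walkingParallelPairOpEquiv.inverse
    (parallelPairHom (C := Type) (TypeCat.ofHom s) (TypeCat.ofHom t) (TypeCat.ofHom s')
      (TypeCat.ofHom t') (TypeCat.ofHom α) (TypeCat.ofHom ν)
      (by ext a; exact (hs a).symm) (by ext a; exact (ht a).symm))

end DirectedGraphs

/-- The representation `M_u` of `↑↑`: `M_u(0)` is the single-arrow graph `p₀ → p₁`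
(nodes `Bool`), `M_u(1)` is the graph `q₀ → q₁ ← q₂` (arcs `Bool`, `false = b₀`, `true = b₁`;
nodes `Fin 3`, `0 = q₀, 1 = q₁, 2 = q₂`), with `M_u(m₀) : a ↦ b₀` and `M_u(m₁) : a ↦ b₁`. -/
def Mu : WalkingParallelPair ⥤ (WalkingParallelPairᵒᵖ ⥤ Type) :=
  parallelPair
    (dgHom (fun _ : PUnit => false) (fun _ => true)
      (fun b : Bool => if b then (2 : Fin 3) else 0) (fun _ => 1)
      (fun _ => (false : Bool)) (fun b : Bool => if b then 1 else 0)
      (fun _ => rfl) (fun _ => rfl))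
    (dgHom (fun _ : PUnit => false) (fun _ => true)
      (fun b : Bool => if b then (2 : Fin 3) else 0) (fun _ => 1)
      (fun _ => (true : Bool)) (fun b : Bool => if b then 1 else 2)
      (fun _ => rfl) (fun _ => rfl))

/-- A directed graph `G` is stable with respect to a representation `M : ↑↑ ⥤ D` if the unit
`η^{M,G} : G ⟶ Hom_D(M(−), G ⊗ M)` of the adjunction `(−) ⊗ M ⊣ Hom_D(M(−), −)` is an
isomorphism, i.e. each component `x ↦ μ^{M,G}_{(c,x)}` is a bijection. -/
def IsStable {D : Type w} [Category.{v} D] [HasLimits D] [HasColimits D]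
    (M : WalkingParallelPair ⥤ D) (G : WalkingParallelPairᵒᵖ ⥤ Type) : Prop :=
  ∀ c : WalkingParallelPair,
    Function.Bijective (fun x : G.obj (op c) => tensorι M G c x)

/-!
`G ⊗ M_u` glues a copy of `p₀ → p₁` for every node `x` of `G` and a copy of `q₀ → q₁ ← q₂` for
every arc `f`, identifying `b₀` with the arc of `∂₀ f` and `b₁` with the arc of `∂₁ f`. So the arcs
of `G ⊗ M_u` are the nodes of `G`, and the arcs of `x` and `y` have the same target exactly when
`x` and `y` are related by the equivalence relation generated by the arcs of `G`. A map
`M_u(0) ⟶ G ⊗ M_u` is an arc and a map `M_u(1) ⟶ G ⊗ M_u` a pair of arcs with a common target.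
Hence the unit is always bijective at `0`, and at `1` it becomes `f ↦ (∂₀ f, ∂₁ f)` into the pairs
related by that generated equivalence: it is injective iff `G` has no parallel arcs and
surjective iff the arc relation is already an equivalence.
-/

section Endpoints

variable {A N : Type} (s t : A → N)

def linkRel (x y : N) : Prop := ∃ a, s a = x ∧ t a = y

def endpoints (a : A) : {p : N × N // Relation.EqvGen (linkRel s t) p.1 p.2} :=
  ⟨(s a, t a), .rel _ _ ⟨a, rfl, rfl⟩⟩

theorem bijective_endpoints_iff :
    Function.Bijective (endpoints s t) ↔
      Equivalence (linkRel s t) ∧ ∀ a b, s a = s b → t a = t b → a = b := by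
  have hinj : Function.Injective (endpoints s t) ↔ ∀ a b, s a = s b → t a = t b → a = b := by
    refine forall₂_congr fun a b => ?_
    rw [endpoints, endpoints, Subtype.mk.injEq, Prod.mk.injEq, and_imp]
  have hsurj : Function.Surjective (endpoints s t) ↔ Equivalence (linkRel s t) := by
    refine ⟨fun h => ?_, fun h ⟨(x, y), hxy⟩ => ?_⟩
    · convert Relation.EqvGen.is_equivalence (linkRel s t)
      ext x y
      refine ⟨.rel x y, fun hxy => ?_⟩
      obtain ⟨a, ha⟩ := h ⟨(x, y), hxy⟩
      exact ⟨a, congrArg (·.1.1) ha, congrArg (·.1.2) ha⟩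
    · obtain ⟨a, rfl, rfl⟩ := h.eqvGen_iff.mp hxy
      exact ⟨a, rfl⟩
  rw [Function.Bijective, hinj, hsurj, and_comm]

end Endpoints

section TensorOfPresheaves

variable {C : Type} [SmallCategory C] {E : Type} [SmallCategory E]
  (M : C ⥤ (E ⥤ Type)) (G : Cᵒᵖ ⥤ Type)

theorem tensorι_comp_map {c c' : C} (g : c ⟶ c') (x : G.obj (op c')) :
    M.map g ≫ tensorι M G c' x = tensorι M G c (G.map g.op x) :=
  colimit.w (elemDiagram M G) (CategoryOfElements.homMk ⟨op c', x⟩ ⟨op c, G.map g.op x⟩ g.op rfl).op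

theorem tensorι_app_map {c c' : C} (g : c ⟶ c') (x : G.obj (op c')) (d : E)
    (a : (M.obj c).obj d) :
    (tensorι M G c' x).app d ((M.map g).app d a) = (tensorι M G c (G.map g.op x)).app d a :=
  types_congr_hom (congrArg (fun h => h.app d) (tensorι_comp_map M G g x)) a

noncomputable def isColimitEvaluationTensorCocone (d : E) :
    IsColimit (((evaluation E Type).obj d).mapCocone (colimit.cocone (elemDiagram M G))) :=
  isColimitOfPreserves _ (colimit.isColimit _)

theorem tensorι_app_jointly_surjective (d : E) (t : (tensorObj M G).obj d) :
    ∃ (c : C) (x : G.obj (op c)) (a : (M.obj c).obj d), (tensorι M G c x).app d a = t := by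
  obtain ⟨⟨⟨⟨c⟩, x⟩⟩, a, rfl⟩ :=
    Types.jointly_surjective _ (isColimitEvaluationTensorCocone M G d) t
  exact ⟨c, x, a, rfl⟩

theorem exists_tensor_app_lift (d : E) {X : Type}
    (leg : ∀ c : C, G.obj (op c) → (M.obj c).obj d → X)
    (hleg : ∀ {c c' : C} (g : c ⟶ c') (x : G.obj (op c')) (a : (M.obj c).obj d),
      leg c' x ((M.map g).app d a) = leg c (G.map g.op x) a) :
    ∃ φ : (tensorObj M G).obj d → X,
      ∀ (c : C) (x : G.obj (op c)) (a : (M.obj c).obj d),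
        φ ((tensorι M G c x).app d a) = leg c x a := by
  let s : Cocone (elemDiagram M G ⋙ (evaluation E Type).obj d) :=
    { pt := X
      ι := { app := fun j => TypeCat.ofHom (leg _ (unop j).2)
             naturality := by
               rintro ⟨⟨⟨c⟩, x⟩⟩ ⟨⟨⟨c'⟩, x'⟩⟩ ⟨⟨⟨g⟩, hg⟩⟩
               ext a
               have hg' : G.map g.op x' = x := hg
               change leg c' x' ((M.map g).app d a) = leg c x a
               rw [← hg']
               exact hleg g x' a } }
  exact ⟨(isColimitEvaluationTensorCocone M G d).desc s, fun c x a =>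
    types_congr_hom ((isColimitEvaluationTensorCocone M G d).fac s (op ⟨op c, x⟩)) a⟩

end TensorOfPresheaves

theorem exists_tensor_app_lift_of_parallelPair {E : Type} [SmallCategory E]
    (M : WalkingParallelPair ⥤ (E ⥤ Type)) (G : WalkingParallelPairᵒᵖ ⥤ Type) (d : E) {X : Type}
    (leg₀ : nodes G → (M.obj zero).obj d → X) (leg₁ : arcs G → (M.obj one).obj d → X)
    (hleft : ∀ f a, leg₁ f ((M.map left).app d a) = leg₀ (srcMap G f) a)
    (hright : ∀ f a, leg₁ f ((M.map right).app d a) = leg₀ (tgtMap G f) a) :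
    ∃ φ : (tensorObj M G).obj d → X,
      (∀ x a, φ ((tensorι M G zero x).app d a) = leg₀ x a) ∧
      (∀ f a, φ ((tensorι M G one f).app d a) = leg₁ f a) := by
  obtain ⟨φ, hφ⟩ := exists_tensor_app_lift M G d
    (fun c => match c with
      | zero => leg₀
      | one => leg₁)
    (by
      rintro c c' g x a
      cases g using WalkingParallelPairHom.casesOn with
      | id => rw [show WalkingParallelPairHom.id c = 𝟙 c from rfl]; simp
      | left => exact hleft x a
      | right => exact hright x a)
  exact ⟨φ, hφ zero, hφ one⟩

section DirectedGraphHoms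

variable {A N : Type} {s t : A → N} {P : WalkingParallelPairᵒᵖ ⥤ Type}

theorem dgPresheaf_hom_src (h : dgPresheaf s t ⟶ P) (a : A) :
    srcMap P (h.app (op one) a) = h.app (op zero) (s a) :=
  (NatTrans.naturality_apply h (Quiver.Hom.op left) a).symm

theorem dgPresheaf_hom_tgt (h : dgPresheaf s t ⟶ P) (a : A) :
    tgtMap P (h.app (op one) a) = h.app (op zero) (t a) :=
  (NatTrans.naturality_apply h (Quiver.Hom.op right) a).symm

def dgPresheafLift (α : A → arcs P) (ν : N → nodes P)
    (hs : ∀ a, srcMap P (α a) = ν (s a)) (ht : ∀ a, tgtMap P (α a) = ν (t a)) :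
    dgPresheaf s t ⟶ P where
  app X := match X with
    | op zero => TypeCat.ofHom ν
    | op one => TypeCat.ofHom α
  naturality := by
    rintro ⟨X⟩ ⟨Y⟩ ⟨g : Y ⟶ X⟩
    cases g using WalkingParallelPairHom.casesOn with
    | id =>
      rw [show op (WalkingParallelPairHom.id X) = 𝟙 (op X) from rfl]
      simp only [CategoryTheory.Functor.map_id, Category.id_comp, Category.comp_id]
    | left => ext a; exact (hs a).symm
    | right => ext a; exact (ht a).symm

theorem dgPresheaf_hom_ext_of_covered (hcov : ∀ n, ∃ a, s a = n ∨ t a = n)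
    {h k : dgPresheaf s t ⟶ P} (harc : ∀ a, h.app (op one) a = k.app (op one) a) : h = k := by
  ext ⟨_ | _⟩ n
  · obtain ⟨a, rfl | rfl⟩ := hcov n
    · exact (dgPresheaf_hom_src h a).symm.trans
        ((congrArg _ (harc a)).trans (dgPresheaf_hom_src k a))
    · exact (dgPresheaf_hom_tgt h a).symm.trans
        ((congrArg _ (harc a)).trans (dgPresheaf_hom_tgt k a))
  · exact harc n

end DirectedGraphHoms

section HomsFromMu

variable (P : WalkingParallelPairᵒᵖ ⥤ Type)

def homMuZeroEquiv : (Mu.obj zero ⟶ P) ≃ arcs P where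
  toFun h := h.app (op one) PUnit.unit
  invFun u := dgPresheafLift (fun _ => u) (fun b => if b then tgtMap P u else srcMap P u)
    (fun _ => rfl) (fun _ => rfl)
  left_inv h := dgPresheaf_hom_ext_of_covered (fun b => ⟨PUnit.unit, by cases b <;> simp⟩)
    (fun _ => rfl)
  right_inv _ := rfl

def homMuOneEquiv :
    (Mu.obj one ⟶ P) ≃ {p : arcs P × arcs P // tgtMap P p.1 = tgtMap P p.2} where
  toFun h := ⟨(h.app (op one) false, h.app (op one) true),
    (dgPresheaf_hom_tgt h false).trans (dgPresheaf_hom_tgt h true).symm⟩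
  invFun p := dgPresheafLift (fun b => if b then p.1.2 else p.1.1)
    (fun i => if i = 0 then srcMap P p.1.1 else if i = 2 then srcMap P p.1.2 else tgtMap P p.1.1)
    (fun b => by cases b <;> rfl) (fun b => by cases b; rfl; exact p.2.symm)
  left_inv h := dgPresheaf_hom_ext_of_covered
    (fun i => by fin_cases i; exacts [⟨false, .inl rfl⟩, ⟨false, .inr rfl⟩, ⟨true, .inl rfl⟩])
    (fun b => by cases b <;> rfl)
  right_inv _ := rfl

end HomsFromMu

section TensorMu

variable (G : WalkingParallelPairᵒᵖ ⥤ Type)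

noncomputable def tensorArc (x : nodes G) : arcs (tensorObj Mu G) :=
  homMuZeroEquiv _ (tensorι Mu G zero x)

theorem tensorι_one_app_false (f : arcs G) :
    (tensorι Mu G one f).app (op one) false = tensorArc G (srcMap G f) :=
  tensorι_app_map Mu G left f (op one) PUnit.unit

theorem tensorι_one_app_true (f : arcs G) :
    (tensorι Mu G one f).app (op one) true = tensorArc G (tgtMap G f) :=
  tensorι_app_map Mu G right f (op one) PUnit.unit

theorem tensorArc_injective : Function.Injective (tensorArc G) := by
  obtain ⟨φ, hφ₀, -⟩ := exists_tensor_app_lift_of_parallelPair Mu G (op one)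
    (fun x _ => x) (fun f (b : Bool) => if b then tgtMap G f else srcMap G f)
    (fun _ _ => rfl) (fun _ _ => rfl)
  intro x y hxy
  exact (hφ₀ x PUnit.unit).symm.trans ((congrArg φ hxy).trans (hφ₀ y PUnit.unit))

theorem tensorArc_surjective : Function.Surjective (tensorArc G) := by
  intro u
  obtain ⟨c, x, a, rfl⟩ := tensorι_app_jointly_surjective Mu G (op one) u
  cases c with
  | zero => exact ⟨x, rfl⟩
  | one =>
    cases (a : Bool) with
    | false => exact ⟨_, (tensorι_one_app_false G x).symm⟩
    | true => exact ⟨_, (tensorι_one_app_true G x).symm⟩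

theorem tensorArc_bijective : Function.Bijective (tensorArc G) :=
  ⟨tensorArc_injective G, tensorArc_surjective G⟩

theorem tgt_tensorArc (x : nodes G) :
    tgtMap _ (tensorArc G x) = (tensorι Mu G zero x).app (op zero) true :=
  dgPresheaf_hom_tgt (tensorι Mu G zero x) PUnit.unit

theorem tgt_tensorArc_eq_iff (x y : nodes G) :
    tgtMap _ (tensorArc G x) = tgtMap _ (tensorArc G y) ↔
      Relation.EqvGen (linkRel (srcMap G) (tgtMap G)) x y := by
  rw [tgt_tensorArc, tgt_tensorArc]
  constructor
  · -- `φ` sends the target of the arc of `x` to the class of `x`, and every other node to `none`.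
    obtain ⟨φ, hφ₀, -⟩ := exists_tensor_app_lift_of_parallelPair Mu G (op zero)
      (fun x (b : Bool) => if b then some (Quot.mk (linkRel (srcMap G) (tgtMap G)) x) else none)
      (fun f (i : Fin 3) => if i = 1 then some (Quot.mk _ (srcMap G f)) else none)
      (fun _ b => by cases b <;> rfl)
      (fun f b => by cases b; rfl; exact congrArg some (Quot.sound ⟨f, rfl, rfl⟩))
    intro hxy
    have h := (hφ₀ x true).symm.trans ((congrArg φ hxy).trans (hφ₀ y true))
    exact Quot.eqvGen_exact (Option.some.inj h)
  · intro hxy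
    induction hxy with
    | rel x y hxy =>
      obtain ⟨f, rfl, rfl⟩ := hxy
      exact (tensorι_app_map Mu G left f (op zero) true).symm.trans
        (tensorι_app_map Mu G right f (op zero) true)
    | refl => rfl
    | symm _ _ _ ih => exact ih.symm
    | trans _ _ _ _ _ ih₁ ih₂ => exact ih₁.trans ih₂

end TensorMu

section StabilityMu

variable (G : WalkingParallelPairᵒᵖ ⥤ Type)

theorem bijective_tensorι_zero : Function.Bijective (tensorι Mu G zero) :=
  (Equiv.comp_bijective _ (homMuZeroEquiv _)).mp (tensorArc_bijective G)

theorem bijective_tensorι_one_iff :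
    Function.Bijective (tensorι Mu G one) ↔
      Function.Bijective (endpoints (srcMap G) (tgtMap G)) := by
  let arcEquiv := Equiv.ofBijective _ (tensorArc_bijective G)
  let pairEquiv : {p : nodes G × nodes G // Relation.EqvGen (linkRel (srcMap G) (tgtMap G)) p.1 p.2} ≃
      {p : arcs (tensorObj Mu G) × arcs (tensorObj Mu G) // tgtMap _ p.1 = tgtMap _ p.2} :=
    Equiv.subtypeEquiv (arcEquiv.prodCongr arcEquiv) fun p => (tgt_tensorArc_eq_iff G p.1 p.2).symm
  have h : homMuOneEquiv _ ∘ tensorι Mu G one = pairEquiv ∘ endpoints (srcMap G) (tgtMap G) := by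
    funext f
    exact Subtype.ext (Prod.ext (tensorι_one_app_false G f) (tensorι_one_app_true G f))
  rw [← Equiv.comp_bijective _ (homMuOneEquiv _), h, Equiv.comp_bijective]

theorem isStable_Mu_iff :
    IsStable Mu G ↔ Function.Bijective (endpoints (srcMap G) (tgtMap G)) := by
  rw [← bijective_tensorι_one_iff]
  refine ⟨fun h => h one, fun h c => ?_⟩
  cases c with
  | zero => exact bijective_tensorι_zero G
  | one => exact h

end StabilityMu

/-- A directed graph `G` is stable with respect to the representation `M_u`
iff `G` is the graph of an equivalence relation on its node set: the relation
`{(∂₀ f, ∂₁ f) : f an arc}` is reflexive, symmetric and transitive, and `G` has no parallel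
arcs. -/
theorem statement16 (G : WalkingParallelPairᵒᵖ ⥤ Type) :
    IsStable Mu G ↔
      (Reflexive (fun x y : nodes G => ∃ f : arcs G, srcMap G f = x ∧ tgtMap G f = y) ∧
       Symmetric (fun x y : nodes G => ∃ f : arcs G, srcMap G f = x ∧ tgtMap G f = y) ∧
       Transitive (fun x y : nodes G => ∃ f : arcs G, srcMap G f = x ∧ tgtMap G f = y) ∧
       ∀ f g : arcs G, srcMap G f = srcMap G g → tgtMap G f = tgtMap G g → f = g) := by
  rw [isStable_Mu_iff, bijective_endpoints_iff]
  exact ⟨fun ⟨h, hpar⟩ => ⟨h.refl, fun _ _ => h.symm, fun _ _ _ => h.trans, hpar⟩,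
    fun ⟨hrefl, hsymm, htrans, hpar⟩ => ⟨⟨hrefl, (hsymm ·), (htrans · ·)⟩, hpar⟩⟩
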